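/- Let R be a commutative ring in which p is a nonzerodivisor, and let ζ ∈ R satisfy ζ^{p^{α+1}} = 1 and ∑_{i=0}^{p−1} ζ^{i·p^α} = 0. Then in the ring 𝕎(R) of p-typical Witt vectors one has ∑_{i=0}^{p−1} [ζ^{i·p^α}] = V(1), where [·] is the Teichmüller lift and V is Verschiebung. (Applied to R = 𝒪_K = W(k)[ζ_{p^{α+1}}] and ζ = ζ_{p^{α+1}}, this says that the image of the distinguished element d = [p]_{q^{p^α}} of the q-prism under the canonical δ-ring map to 𝕎(𝒪_K) equals V(1).) -/
import Mathlib

open Finset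

/-- Let `p` be a prime, `α ≥ 0`, and `R` a commutative ring in which `p`
is a nonzerodivisor.  If `ζ ∈ R` satisfies `ζ^{p^{α+1}} = 1` and `∑_{i=0}^{p−1} ζ^{i·p^α} = 0`,
then in the ring `𝕎(R)` of `p`-typical Witt vectors one has
`∑_{i=0}^{p−1} [ζ^{i·p^α}] = V(1)`, where `[·]` is the Teichmuller lift and `V` is
Verschiebung. -/
theorem stmt10 (p : ℕ) [Fact p.Prime] (α : ℕ) (R : Type*) [CommRing R]
    (hp : (p : R) ∈ nonZeroDivisors R)
    (ζ : R) (hζ1 : ζ ^ p ^ (α + 1) = 1)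
    (hζ2 : ∑ i ∈ Finset.range p, ζ ^ (i * p ^ α) = 0) :
    ∑ i ∈ Finset.range p, WittVector.teichmuller p (ζ ^ (i * p ^ α)) =
      WittVector.verschiebung (1 : WittVector p R) := by
  set S := Localization.Away (p : R) with hS
  have hinj : Function.Injective (algebraMap R S) :=
    IsLocalization.injective S (Submonoid.powers_le.mpr hp)
  have hpu : IsUnit ((p : ℕ) : S) := by
    have := IsLocalization.Away.algebraMap_isUnit (S := S) (x := (p : R))
    rwa [map_natCast] at this
  letI : Invertible ((p : ℕ) : S) := hpu.invertible
  apply WittVector.map_injective (algebraMap R S) hinj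
  apply (WittVector.ghostMap.bijective_of_invertible p S).injective
  funext n
  simp only [WittVector.ghostMap_apply, map_sum, WittVector.map_teichmuller,
    WittVector.map_verschiebung, map_one, map_sum]
  cases n with
  | zero =>
    simp only [WittVector.ghostComponent_zero_verschiebung,
      WittVector.ghostComponent_teichmuller, pow_zero, pow_one, ← map_sum, hζ2, map_zero]
  | succ n =>
    have h1 : ∀ i ∈ Finset.range p,
        WittVector.ghostComponent (n + 1)
          (WittVector.teichmuller p (algebraMap R S (ζ ^ (i * p ^ α)))) = 1 := by
      intro i _
      rw [WittVector.ghostComponent_teichmuller, ← map_pow, ← pow_mul]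
      have : i * p ^ α * p ^ (n + 1) = p ^ (α + 1) * (i * p ^ n) := by ring
      rw [this, pow_mul, hζ1, one_pow, map_one]
    rw [Finset.sum_congr rfl h1, Finset.sum_const, Finset.card_range, nsmul_eq_mul, mul_one,
      WittVector.ghostComponent_verschiebung, map_one, mul_one]
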